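/- For any L > 0 and ρ₁,ρ₂ ∈ [0,1), the Kullback-Leibler contrast d_KL(ρ₁,ρ₂|L) = L·[(1-ρ₁ρ₂)(2-ρ₁²-ρ₂²)/((1-ρ₁²)(1-ρ₂²)) − 2] is nonnegative, symmetric in (ρ₁,ρ₂), and equals zero if and only if ρ₁ = ρ₂. -/

import Mathlib

noncomputable def xi1 (r1 r2 : ℝ) : ℝ :=
  (1 - r1 * r2) * (2 - r1 ^ 2 - r2 ^ 2) / ((1 - r1 ^ 2) * (1 - r2 ^ 2))

noncomputable def dKL (L r1 r2 : ℝ) : ℝ := L * (xi1 r1 r2 - 2)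

/-! The contrast factors as `L (r₁ - r₂)² (1 + r₁r₂) / ((1 - r₁²)(1 - r₂²))`; for correlations
in `(-1, 1)` the last two factors are positive, so everything is decided by `(r₁ - r₂)²`. -/

theorem xi1_comm (r1 r2 : ℝ) : xi1 r1 r2 = xi1 r2 r1 := by
  unfold xi1
  ring

theorem dKL_comm (L r1 r2 : ℝ) : dKL L r1 r2 = dKL L r2 r1 := by
  rw [dKL, dKL, xi1_comm]

theorem xi1_sub_two_eq {r1 r2 : ℝ} (h1 : 1 - r1 ^ 2 ≠ 0) (h2 : 1 - r2 ^ 2 ≠ 0) :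
    xi1 r1 r2 - 2 = (r1 - r2) ^ 2 * (1 + r1 * r2) / ((1 - r1 ^ 2) * (1 - r2 ^ 2)) := by
  unfold xi1
  field_simp
  ring

theorem one_sub_sq_pos_of_abs_lt_one {r : ℝ} (h : |r| < 1) : 0 < 1 - r ^ 2 :=
  sub_pos.mpr (sq_lt_one_iff_abs_lt_one r |>.mpr h)

theorem one_add_mul_pos_of_abs_lt_one {r1 r2 : ℝ} (h1 : |r1| < 1) (h2 : |r2| < 1) :
    0 < 1 + r1 * r2 := by
  have : |r1 * r2| < 1 := by
    rw [abs_mul]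
    exact mul_lt_one_of_nonneg_of_lt_one_left (abs_nonneg _) h1 h2.le
  linarith [neg_abs_le (r1 * r2)]

theorem xi1_sub_two_nonneg {r1 r2 : ℝ} (h1 : |r1| < 1) (h2 : |r2| < 1) : 0 ≤ xi1 r1 r2 - 2 := by
  have := one_sub_sq_pos_of_abs_lt_one h1
  have := one_sub_sq_pos_of_abs_lt_one h2
  have := one_add_mul_pos_of_abs_lt_one h1 h2
  rw [xi1_sub_two_eq (by positivity) (by positivity)]
  positivity

theorem xi1_sub_two_eq_zero_iff {r1 r2 : ℝ} (h1 : |r1| < 1) (h2 : |r2| < 1) :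
    xi1 r1 r2 - 2 = 0 ↔ r1 = r2 := by
  have d1 := one_sub_sq_pos_of_abs_lt_one h1
  have d2 := one_sub_sq_pos_of_abs_lt_one h2
  have hc := one_add_mul_pos_of_abs_lt_one h1 h2
  rw [xi1_sub_two_eq d1.ne' d2.ne', div_eq_zero_iff, mul_eq_zero, or_iff_left hc.ne',
    or_iff_left (mul_pos d1 d2).ne', sq_eq_zero_iff, sub_eq_zero]

theorem stmt_1 (L r1 r2 : ℝ) (hL : 0 < L)
    (h1 : r1 ∈ Set.Ico (0 : ℝ) 1) (h2 : r2 ∈ Set.Ico (0 : ℝ) 1) :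
    0 ≤ dKL L r1 r2 ∧ dKL L r1 r2 = dKL L r2 r1 ∧ (dKL L r1 r2 = 0 ↔ r1 = r2) := by
  have a1 : |r1| < 1 := abs_lt.mpr ⟨by linarith [h1.1], h1.2⟩
  have a2 : |r2| < 1 := abs_lt.mpr ⟨by linarith [h2.1], h2.2⟩
  refine ⟨mul_nonneg hL.le (xi1_sub_two_nonneg a1 a2), dKL_comm L r1 r2, ?_⟩
  rw [dKL, mul_eq_zero, or_iff_right hL.ne', xi1_sub_two_eq_zero_iff a1 a2]
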